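/- Let (B, ρ) be an H-comodule algebra and let A ⊆ B be a right ideal which is a unital algebra with unity 1_A. Then the map ρ̄: A → A ⊗ H defined by ρ̄(a) = (1_A ⊗ 1_H)ρ(a) makes A a partial H-comodule algebra (the induced partial coaction). -/

import Mathlib

/-!
Let `u = 1_A ⊗ 1`. Since `A` is a right ideal, left multiplication by `u` lands in `A ⊗ H`, and
since `1_A` is a right unit of `A`, every element of `A ⊗ H` absorbs `u` on the right. The three
axioms then follow from the corresponding axioms of `ρ` by inserting or deleting a factor `u`;
for the counit and coassociativity axioms one also uses that `(I ⊗ ε)` and `(I ⊗ Δ)` are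
algebra maps, as `H` is a bialgebra.
-/

open TensorProduct

section RightIdeal

variable {R A L : Type*} [CommSemiring R] [Semiring A] [Algebra R A] [Semiring L] [Algebra R L]
  {I : Submodule R A}

theorem tmul_one_mul_mem_range_rTensor_subtype {e : A} (he : ∀ b, e * b ∈ I)
    (t : A ⊗[R] L) : (e ⊗ₜ[R] (1 : L)) * t ∈ LinearMap.range (I.subtype.rTensor L) := by
  induction t using TensorProduct.induction_on with
  | zero => simp
  | tmul b h => exact ⟨⟨e * b, he b⟩ ⊗ₜ h, by simp⟩
  | add x y hx hy => rw [mul_add]; exact add_mem hx hy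

theorem mul_tmul_one_eq_self_of_mem_range_rTensor_subtype {e : A} (he : ∀ a ∈ I, a * e = a)
    {x : A ⊗[R] L} (hx : x ∈ LinearMap.range (I.subtype.rTensor L)) :
    x * (e ⊗ₜ[R] (1 : L)) = x := by
  obtain ⟨y, rfl⟩ := hx
  induction y using TensorProduct.induction_on with
  | zero => simp
  | tmul a h => simp [he a a.2]
  | add y z hy hz => rw [map_add, add_mul, hy, hz]

end RightIdeal

section RTensor

variable {R M A C L : Type*} [CommSemiring R] [AddCommMonoid M] [Module R M]
  [Semiring A] [Algebra R A] [Semiring C] [Algebra R C] [Semiring L] [Algebra R L]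

theorem rTensor_mulLeft_comp_apply (c : C) (f : M →ₗ[R] C) (t : M ⊗[R] L) :
    (LinearMap.mulLeft R c ∘ₗ f).rTensor L t = (c ⊗ₜ[R] (1 : L)) * f.rTensor L t := by
  induction t using TensorProduct.induction_on with
  | zero => simp
  | tmul m h => simp
  | add x y hx hy => rw [map_add, hx, hy, map_add, mul_add]

theorem rTensor_tmul_one_mul {f : A →ₗ[R] C} (hf : ∀ x y, f (x * y) = f x * f y) (a : A)
    (t : A ⊗[R] L) :
    f.rTensor L ((a ⊗ₜ[R] (1 : L)) * t) = (f a ⊗ₜ[R] (1 : L)) * f.rTensor L t := by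
  induction t using TensorProduct.induction_on with
  | zero => simp
  | tmul b h => simp [hf]
  | add x y hx hy => rw [mul_add, map_add, hx, hy, map_add, mul_add]

end RTensor

section Bialgebra

variable {R A L : Type*} [CommSemiring R] [Semiring A] [Algebra R A] [Semiring L] [Bialgebra R L]

theorem rid_lTensor_counit_mul (x y : A ⊗[R] L) :
    TensorProduct.rid R A (Coalgebra.counit.lTensor A (x * y)) =
      TensorProduct.rid R A (Coalgebra.counit.lTensor A x) *
        TensorProduct.rid R A (Coalgebra.counit.lTensor A y) :=
  map_mul ((Algebra.TensorProduct.rid R R A).toAlgHom.comp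
    (Algebra.TensorProduct.map (AlgHom.id R A) (Bialgebra.counitAlgHom R L))) x y

theorem assoc_symm_lTensor_comul_mul (x y : A ⊗[R] L) :
    (TensorProduct.assoc R A L L).symm (Coalgebra.comul.lTensor A (x * y)) =
      (TensorProduct.assoc R A L L).symm (Coalgebra.comul.lTensor A x) *
        (TensorProduct.assoc R A L L).symm (Coalgebra.comul.lTensor A y) :=
  map_mul ((Algebra.TensorProduct.assoc R R R A L L).symm.toAlgHom.comp
    (Algebra.TensorProduct.map (AlgHom.id R A) (Bialgebra.comulAlgHom R L))) x y

theorem assoc_symm_lTensor_comul_tmul_one (a : A) :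
    (TensorProduct.assoc R A L L).symm (Coalgebra.comul.lTensor A (a ⊗ₜ[R] (1 : L))) =
      (a ⊗ₜ[R] (1 : L)) ⊗ₜ[R] (1 : L) := by
  simp [Algebra.TensorProduct.one_def]

end Bialgebra

noncomputable section

variable (k : Type*) [Field k] (H B : Type*) [Ring H] [HopfAlgebra k H] [Ring B] [Algebra k B]

theorem induced_partial_coaction
    (ρ : B →ₗ[k] B ⊗[k] H)
    -- `ρ` is an algebra homomorphism
    (hmul : ∀ x y : B, ρ (x * y) = ρ x * ρ y)
    -- counit axiom of the comodule structure
    (hcounit : ∀ x : B,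
      (TensorProduct.rid k B) ((LinearMap.lTensor B Coalgebra.counit) (ρ x)) = x)
    -- coassociativity axiom of the comodule structure
    (hcoassoc : ∀ x : B,
      (LinearMap.rTensor H ρ) (ρ x) =
        (TensorProduct.assoc k B H H).symm ((LinearMap.lTensor B Coalgebra.comul) (ρ x)))
    -- `A` is a right ideal of `B` ...
    (A : Submodule k B) (hideal : ∀ a ∈ A, ∀ b : B, a * b ∈ A)
    -- ... which is a unital algebra with unity `1_A ∈ A`
    (oneA : B) (honeA : oneA ∈ A)
    (hunit : ∀ a ∈ A, oneA * a = a ∧ a * oneA = a) :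
    -- `ρ̄(a) := (1_A ⊗ 1_H) ρ(a)`  takes values in `A ⊗ H ⊆ B ⊗ H`
    (∀ a ∈ A, (oneA ⊗ₜ[k] (1 : H)) * ρ a ∈
        LinearMap.range (LinearMap.rTensor H A.subtype)) ∧
    -- (1)  `ρ̄(a b) = ρ̄(a) ρ̄(b)`
    (∀ a ∈ A, ∀ b ∈ A,
      (oneA ⊗ₜ[k] (1 : H)) * ρ (a * b) =
        ((oneA ⊗ₜ[k] (1 : H)) * ρ a) * ((oneA ⊗ₜ[k] (1 : H)) * ρ b)) ∧
    -- (2)  `(I ⊗ ε) ρ̄(a) = a`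
    (∀ a ∈ A,
      (TensorProduct.rid k B)
        ((LinearMap.lTensor B Coalgebra.counit) ((oneA ⊗ₜ[k] (1 : H)) * ρ a)) = a) ∧
    -- (3)  `(ρ̄ ⊗ I) ρ̄(a) = (ρ̄(1_A) ⊗ 1_H) ((I ⊗ Δ) ρ̄(a))`
    (∀ a ∈ A,
      (LinearMap.rTensor H (LinearMap.mulLeft k (oneA ⊗ₜ[k] (1 : H)) ∘ₗ ρ))
          ((oneA ⊗ₜ[k] (1 : H)) * ρ a) =
        (((oneA ⊗ₜ[k] (1 : H)) * ρ oneA) ⊗ₜ[k] (1 : H)) *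
          ((TensorProduct.assoc k B H H).symm
            ((LinearMap.lTensor B Coalgebra.comul) ((oneA ⊗ₜ[k] (1 : H)) * ρ a)))) := by
  set u : B ⊗[k] H := oneA ⊗ₜ[k] (1 : H)
  have hmem (t : B ⊗[k] H) : u * t ∈ LinearMap.range (A.subtype.rTensor H) :=
    tmul_one_mul_mem_range_rTensor_subtype (hideal oneA honeA) t
  have habsorb (t : B ⊗[k] H) : u * t * u = u * t :=
    mul_tmul_one_eq_self_of_mem_range_rTensor_subtype (fun a ha => (hunit a ha).2) (hmem t)
  refine ⟨fun a _ => hmem (ρ a), fun a _ b _ => ?_, fun a ha => ?_, fun a _ => ?_⟩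
  · rw [hmul, ← mul_assoc, ← mul_assoc, habsorb]
  · rw [rid_lTensor_counit_mul, hcounit]
    simp [u, (hunit a ha).1]
  · rw [rTensor_mulLeft_comp_apply, rTensor_tmul_one_mul hmul, hcoassoc,
      assoc_symm_lTensor_comul_mul, assoc_symm_lTensor_comul_tmul_one, ← mul_assoc, ← mul_assoc,
      Algebra.TensorProduct.tmul_mul_tmul, Algebra.TensorProduct.tmul_mul_tmul, habsorb]

end
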